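/- Let F be a field, m, k ≥ 1, let d be a fixed row vector of F^k, let Q be a quadratic form on F^m with polar form of Gram matrix J, and let φ: (F^k, +) → O_m(F, Q) be a group homomorphism. Then the set M of block matrices (1, 0, a; 0, φ(a), 0; 0, 0, I_k), where a ranges over F^k, is a subgroup of AGL_{m+k}(F), and M normalizes the subgroup N = {(1, v, Q(v)d; 0, I_m, Jv^T ⊗ d; 0, 0, I_k) : v ∈ F^m}. -/

import Mathlib

open Matrix

/-- `M` lies in the affine group `AGL_n(F) ≤ GL_{n+1}(F)`:
it has block form `(1 v; 0 A)`, i.e. entry `(0,0)` equals `1` and the rest of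
the first column is `0`. -/
def IsAffine {F : Type*} [Field F] {n : ℕ} (M : GL (Fin (n + 1)) F) : Prop :=
  (M : Matrix (Fin (n + 1)) (Fin (n + 1)) F) 0 0 = 1 ∧
    ∀ i : Fin (n + 1), i ≠ 0 → (M : Matrix (Fin (n + 1)) (Fin (n + 1)) F) i 0 = 0

/-- `M` is a translation: it is affine with linear part `A = I_n`,
i.e. all rows other than the first agree with the identity matrix. -/
def IsTranslation {F : Type*} [Field F] {n : ℕ} (M : GL (Fin (n + 1)) F) : Prop :=
  IsAffine M ∧ ∀ i j : Fin (n + 1), i ≠ 0 →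
    (M : Matrix (Fin (n + 1)) (Fin (n + 1)) F) i j = if i = j then 1 else 0

/-- `R` is a regular subgroup of `AGL_n(F)`: all its elements are affine and for
every `v ∈ F^n` there is exactly one element of `R` with first row `(1, v)`. -/
def IsRegularAffine {F : Type*} [Field F] {n : ℕ} (R : Subgroup (GL (Fin (n + 1)) F)) : Prop :=
  (∀ M ∈ R, IsAffine M) ∧
    ∀ v : Fin n → F, ∃! M : GL (Fin (n + 1)) F, M ∈ R ∧
      ∀ j : Fin n, (M : Matrix (Fin (n + 1)) (Fin (n + 1)) F) 0 j.succ = v j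

/-- `M ∈ GL_{n+1}(F)` is unipotent: `(M - I)^{n+1} = 0`. -/
def IsUnipotent {F : Type*} [Field F] {n : ℕ} (M : GL (Fin (n + 1)) F) : Prop :=
  ((M : Matrix (Fin (n + 1)) (Fin (n + 1)) F) - 1) ^ (n + 1) = 0

/-- The block matrix `(1, v, Q(v)d; 0, I_m, Jvᵀ ⊗ d; 0, 0, I_k)` of size `m+k+1`.
Indices `0`, `1..m`, `m+1..m+k` correspond to the three blocks. -/
def NMat {F : Type*} [Field F] (m k : ℕ) (Q : (Fin m → F) → F)
    (J : Matrix (Fin m) (Fin m) F) (d : Fin k → F) (v : Fin m → F) :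
    Matrix (Fin (m + k + 1)) (Fin (m + k + 1)) F :=
  Matrix.of fun i j =>
    if hi0 : (i : ℕ) = 0 then
      if hj0 : (j : ℕ) = 0 then 1
      else if hjm : (j : ℕ) ≤ m then v ⟨(j : ℕ) - 1, by omega⟩
      else Q v * d ⟨(j : ℕ) - m - 1, by have := j.2; omega⟩
    else if him : (i : ℕ) ≤ m then
      if hj0 : (j : ℕ) = 0 then 0
      else if hjm : (j : ℕ) ≤ m then (if i = j then 1 else 0)
      else (J.mulVec v) ⟨(i : ℕ) - 1, by omega⟩ * d ⟨(j : ℕ) - m - 1, by have := j.2; omega⟩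
    else
      if hjm : m < (j : ℕ) then (if i = j then 1 else 0) else 0

/-- The block matrix `(1, 0, a; 0, φ(a), 0; 0, 0, I_k)` of size `m+k+1`. -/
def MMat {F : Type*} [Field F] (m k : ℕ)
    (φ : (Fin k → F) → Matrix (Fin m) (Fin m) F) (a : Fin k → F) :
    Matrix (Fin (m + k + 1)) (Fin (m + k + 1)) F :=
  Matrix.of fun i j =>
    if hi0 : (i : ℕ) = 0 then
      if hj0 : (j : ℕ) = 0 then 1
      else if hjm : (j : ℕ) ≤ m then 0
      else a ⟨(j : ℕ) - m - 1, by have := j.2; omega⟩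
    else if him : (i : ℕ) ≤ m then
      if hjm : 1 ≤ (j : ℕ) ∧ (j : ℕ) ≤ m then
        φ a ⟨(i : ℕ) - 1, by omega⟩ ⟨(j : ℕ) - 1, by omega⟩
      else 0
    else
      if hjm : m < (j : ℕ) then (if i = j then 1 else 0) else 0

/-!
The polar identity `Q (v + w) = Q v + Q w + v ⬝ᵥ J *ᵥ w` is exactly what makes `v ↦ NMat v`
multiplicative, and `a ↦ MMat a` is multiplicative because `φ` is. Since each `φ a` preserves
`Q`, it preserves the polar form, i.e. `φ a * J * (φ a)ᵀ = J`; a block computation then gives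
`NMat w * MMat a = MMat a * NMat (w ᵥ* φ a)`, so conjugating `NMat v` by `MMat a` yields
`NMat (v ᵥ* φ (-a))`.
-/

theorem apply_add_eq_of_polar_eq_dotProduct {R n : Type*} [CommRing R] [Fintype n]
    {Q : (n → R) → R} {J : Matrix n n R}
    (hJ : ∀ u w : n → R, QuadraticMap.polar Q u w = u ⬝ᵥ J *ᵥ w) (x y : n → R) :
    Q (x + y) = Q x + Q y + x ⬝ᵥ J *ᵥ y := by
  rw [← hJ, QuadraticMap.polar]
  ring

theorem Matrix.mul_mul_transpose_eq_of_isometry {R n : Type*} [CommRing R] [Fintype n]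
    [DecidableEq n] {Q : (n → R) → R} {J A : Matrix n n R}
    (hJ : ∀ u w : n → R, QuadraticMap.polar Q u w = u ⬝ᵥ J *ᵥ w)
    (hA : ∀ w, Q (w ᵥ* A) = Q w) : A * J * Aᵀ = J := by
  refine Matrix.toBilin'.injective (LinearMap.ext₂ fun u w => ?_)
  simp only [Matrix.toBilin'_apply', ← mulVec_mulVec, mulVec_transpose, dotProduct_mulVec u A,
    ← hJ, QuadraticMap.polar, ← add_vecMul, hA]

@[elab_as_elim]
theorem Fin.succAddCases {m k : ℕ} {motive : Fin (m + k + 1) → Prop} (zero : motive 0)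
    (left : ∀ i : Fin m, motive (Fin.castAdd k i).succ)
    (right : ∀ i : Fin k, motive (Fin.natAdd m i).succ) (i : Fin (m + k + 1)) : motive i :=
  Fin.cases zero (Fin.addCases left right) i

theorem MonoidHom.mem_range_toHomUnits_iff {A M : Type*} [AddGroup A] [Monoid M]
    (f : Multiplicative A →* M) (u : Mˣ) :
    u ∈ f.toHomUnits.range ↔ ∃ a : A, (u : M) = f (Multiplicative.ofAdd a) := by
  simp [MonoidHom.mem_range, Units.ext_iff, eq_comm]

section Blocks

variable {F : Type*} [Field F] {m k : ℕ}

section Entries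

variable (Q : (Fin m → F) → F) (J : Matrix (Fin m) (Fin m) F) (d : Fin k → F)
  (v : Fin m → F) (i : Fin m) (j : Fin k)

@[simp] theorem NMat_zero_zero : NMat m k Q J d v 0 0 = 1 := by simp [NMat]
@[simp] theorem NMat_zero_castAdd : NMat m k Q J d v 0 (Fin.castAdd k i).succ = v i := by
  simp [NMat]
@[simp] theorem NMat_zero_natAdd : NMat m k Q J d v 0 (Fin.natAdd m j).succ = Q v * d j := by
  simp [NMat, add_assoc]
@[simp] theorem NMat_castAdd_zero : NMat m k Q J d v (Fin.castAdd k i).succ 0 = 0 := by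
  simp [NMat]
@[simp] theorem NMat_castAdd_castAdd (i' : Fin m) :
    NMat m k Q J d v (Fin.castAdd k i).succ (Fin.castAdd k i').succ =
      if i = i' then 1 else 0 := by
  simp [NMat]
@[simp] theorem NMat_castAdd_natAdd :
    NMat m k Q J d v (Fin.castAdd k i).succ (Fin.natAdd m j).succ = (J *ᵥ v) i * d j := by
  simp [NMat, add_assoc]
@[simp] theorem NMat_natAdd_zero : NMat m k Q J d v (Fin.natAdd m j).succ 0 = 0 := by
  simp [NMat]
@[simp] theorem NMat_natAdd_castAdd :
    NMat m k Q J d v (Fin.natAdd m j).succ (Fin.castAdd k i).succ = 0 := by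
  simp [NMat]
@[simp] theorem NMat_natAdd_natAdd (j' : Fin k) :
    NMat m k Q J d v (Fin.natAdd m j).succ (Fin.natAdd m j').succ = if j = j' then 1 else 0 := by
  simp [NMat]

variable (φ : (Fin k → F) → Matrix (Fin m) (Fin m) F) (a : Fin k → F)

@[simp] theorem MMat_zero_zero : MMat m k φ a 0 0 = 1 := by simp [MMat]
@[simp] theorem MMat_zero_castAdd : MMat m k φ a 0 (Fin.castAdd k i).succ = 0 := by simp [MMat]
@[simp] theorem MMat_zero_natAdd : MMat m k φ a 0 (Fin.natAdd m j).succ = a j := by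
  simp [MMat, add_assoc]
@[simp] theorem MMat_castAdd_zero : MMat m k φ a (Fin.castAdd k i).succ 0 = 0 := by simp [MMat]
@[simp] theorem MMat_castAdd_castAdd (i' : Fin m) :
    MMat m k φ a (Fin.castAdd k i).succ (Fin.castAdd k i').succ = φ a i i' := by
  simp [MMat]
@[simp] theorem MMat_castAdd_natAdd :
    MMat m k φ a (Fin.castAdd k i).succ (Fin.natAdd m j).succ = 0 := by
  simp [MMat]
@[simp] theorem MMat_natAdd_zero : MMat m k φ a (Fin.natAdd m j).succ 0 = 0 := by simp [MMat]
@[simp] theorem MMat_natAdd_castAdd :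
    MMat m k φ a (Fin.natAdd m j).succ (Fin.castAdd k i).succ = 0 := by
  simp [MMat]
@[simp] theorem MMat_natAdd_natAdd (j' : Fin k) :
    MMat m k φ a (Fin.natAdd m j).succ (Fin.natAdd m j').succ = if j = j' then 1 else 0 := by
  simp [MMat]

end Entries

variable {Q : (Fin m → F) → F} {J : Matrix (Fin m) (Fin m) F} {d : Fin k → F}
  {φ : (Fin k → F) → Matrix (Fin m) (Fin m) F}

theorem NMat_zero (hQ : Q 0 = 0) : NMat m k Q J d 0 = 1 := by
  ext i j
  induction i using Fin.succAddCases <;> induction j using Fin.succAddCases <;>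
    simp [one_apply, hQ, Fin.ext_iff] <;> omega

theorem NMat_mul (hQ : ∀ x y, Q (x + y) = Q x + Q y + x ⬝ᵥ J *ᵥ y) (v w : Fin m → F) :
    NMat m k Q J d v * NMat m k Q J d w = NMat m k Q J d (v + w) := by
  ext i j
  induction i using Fin.succAddCases <;> induction j using Fin.succAddCases <;>
    simp [mul_apply, Fin.sum_univ_succ, Fin.sum_univ_add, hQ, dotProduct, Finset.sum_mul,
      mulVec_add, add_mul, mul_assoc] <;> ring

theorem MMat_zero (hφ : φ 0 = 1) : MMat m k φ 0 = 1 := by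
  ext i j
  induction i using Fin.succAddCases <;> induction j using Fin.succAddCases <;>
    simp [one_apply, hφ, Fin.ext_iff] <;> omega

theorem MMat_mul (hφ : ∀ a b, φ (a + b) = φ a * φ b) (a b : Fin k → F) :
    MMat m k φ a * MMat m k φ b = MMat m k φ (a + b) := by
  ext i j
  induction i using Fin.succAddCases <;> induction j using Fin.succAddCases <;>
    simp [mul_apply, Fin.sum_univ_succ, Fin.sum_univ_add, hφ, add_comm]

def NMatHom (Q : (Fin m → F) → F) (J : Matrix (Fin m) (Fin m) F) (d : Fin k → F)
    (hQ : ∀ x y, Q (x + y) = Q x + Q y + x ⬝ᵥ J *ᵥ y) (hQ0 : Q 0 = 0) :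
    Multiplicative (Fin m → F) →* Matrix (Fin (m + k + 1)) (Fin (m + k + 1)) F where
  toFun v := NMat m k Q J d v.toAdd
  map_one' := NMat_zero hQ0
  map_mul' v w := (NMat_mul hQ v.toAdd w.toAdd).symm

def MMatHom (φ : (Fin k → F) → Matrix (Fin m) (Fin m) F)
    (hφ : ∀ a b, φ (a + b) = φ a * φ b) (hφ0 : φ 0 = 1) :
    Multiplicative (Fin k → F) →* Matrix (Fin (m + k + 1)) (Fin (m + k + 1)) F where
  toFun a := MMat m k φ a.toAdd
  map_one' := MMat_zero hφ0
  map_mul' a b := (MMat_mul hφ a.toAdd b.toAdd).symm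

theorem NMat_mul_MMat {a : Fin k → F} {w : Fin m → F} (hQ : Q (w ᵥ* φ a) = Q w)
    (hJ : φ a * J * (φ a)ᵀ = J) :
    NMat m k Q J d w * MMat m k φ a = MMat m k φ a * NMat m k Q J d (w ᵥ* φ a) := by
  have hJw : J *ᵥ w = φ a *ᵥ J *ᵥ (w ᵥ* φ a) := by
    rw [← mulVec_transpose, mulVec_mulVec, mulVec_mulVec, hJ]
  ext i j
  induction i using Fin.succAddCases <;> induction j using Fin.succAddCases <;>
    simp [mul_apply, Fin.sum_univ_succ, Fin.sum_univ_add, hQ, hJw, add_comm]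
  · simp [vecMul, dotProduct]
  · rw [← mulVec_mulVec, mulVec, dotProduct, Finset.sum_mul]
    simp only [mul_assoc]

theorem MMat_mul_NMat_mul_MMat_neg (hφ : ∀ a b, φ (a + b) = φ a * φ b) (hφ0 : φ 0 = 1)
    (hQ : ∀ a w, Q (w ᵥ* φ a) = Q w) (hJ : ∀ a, φ a * J * (φ a)ᵀ = J)
    (a : Fin k → F) (v : Fin m → F) :
    MMat m k φ a * NMat m k Q J d v * MMat m k φ (-a) = NMat m k Q J d (v ᵥ* φ (-a)) := by
  have hv : v ᵥ* φ (-a) ᵥ* φ a = v := by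
    rw [vecMul_vecMul, ← hφ, neg_add_cancel, hφ0, vecMul_one]
  calc MMat m k φ a * NMat m k Q J d v * MMat m k φ (-a)
      = NMat m k Q J d (v ᵥ* φ (-a)) * MMat m k φ a * MMat m k φ (-a) := by
        rw [NMat_mul_MMat (hQ a _) (hJ a), hv]
    _ = NMat m k Q J d (v ᵥ* φ (-a)) := by
        rw [mul_assoc, MMat_mul hφ, add_neg_cancel, MMat_zero hφ0, mul_one]

theorem isAffine_of_val_eq_MMat {M : GL (Fin (m + k + 1)) F} {a : Fin k → F}
    (h : (M : Matrix (Fin (m + k + 1)) (Fin (m + k + 1)) F) = MMat m k φ a) : IsAffine M := by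
  refine ⟨by simp [h], fun i hi => ?_⟩
  induction i using Fin.succAddCases
  · exact absurd rfl hi
  all_goals simp [h]

end Blocks

theorem MMat_set_is_subgroup_normalizing_general {F : Type*} [Field F] {m k : ℕ}
    (d : Fin k → F) (Q : QuadraticForm F (Fin m → F)) (J : Matrix (Fin m) (Fin m) F)
    (hJ : ∀ u w : Fin m → F, QuadraticMap.polar (fun x => Q x) u w = u ⬝ᵥ J.mulVec w)
    (φ : (Fin k → F) → Matrix (Fin m) (Fin m) F)
    (hφ_mul : ∀ a b : Fin k → F, φ (a + b) = φ a * φ b)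
    (hφ_unit : ∀ a : Fin k → F, IsUnit (φ a))
    (hφ_isom : ∀ (a : Fin k → F) (w : Fin m → F), Q (Matrix.vecMul w (φ a)) = Q w) :
    ∃ Msub Nsub : Subgroup (GL (Fin (m + k + 1)) F),
      (∀ M : GL (Fin (m + k + 1)) F,
          M ∈ Nsub ↔ ∃ v : Fin m → F,
            (M : Matrix (Fin (m + k + 1)) (Fin (m + k + 1)) F) =
              NMat m k (fun x => Q x) J d v) ∧
      (∀ M : GL (Fin (m + k + 1)) F,
          M ∈ Msub ↔ ∃ a : Fin k → F,
            (M : Matrix (Fin (m + k + 1)) (Fin (m + k + 1)) F) = MMat m k φ a) ∧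
      (∀ M ∈ Msub, IsAffine M) ∧
      (∀ x ∈ Msub, ∀ y ∈ Nsub, x * y * x⁻¹ ∈ Nsub) := by
  have hφ0 : φ 0 = 1 := (IsIdempotentElem.iff_eq_one_of_isUnit (hφ_unit 0)).mp <| by
    rw [IsIdempotentElem, ← hφ_mul, add_zero]
  have hJφ (a : Fin k → F) : φ a * J * (φ a)ᵀ = J :=
    Matrix.mul_mul_transpose_eq_of_isometry hJ (hφ_isom a)
  let fM := MMatHom φ hφ_mul hφ0
  let fN := NMatHom (fun x => Q x) J d (apply_add_eq_of_polar_eq_dotProduct hJ) Q.map_zero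
  refine ⟨fM.toHomUnits.range, fN.toHomUnits.range, fN.mem_range_toHomUnits_iff,
    fM.mem_range_toHomUnits_iff, ?_, ?_⟩
  · rintro _ ⟨a, rfl⟩
    exact isAffine_of_val_eq_MMat rfl
  · rintro _ ⟨a, rfl⟩ _ ⟨v, rfl⟩
    refine ⟨Multiplicative.ofAdd (v.toAdd ᵥ* φ (-a.toAdd)), Units.ext ?_⟩
    rw [← map_inv]
    exact (MMat_mul_NMat_mul_MMat_neg hφ_mul hφ0 hφ_isom hJφ a.toAdd v.toAdd).symm

/-- Lemma 3(b): the set `M = {(1, 0, a; 0, φ(a), 0; 0, 0, I_k) : a ∈ F^k}` is a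
subgroup of `AGL_{m+k}(F)` normalizing the subgroup `N`. -/
theorem MMat_set_is_subgroup_normalizing {F : Type*} [Field F] {m k : ℕ}
    (hm : 1 ≤ m) (hk : 1 ≤ k)
    (d : Fin k → F) (Q : QuadraticForm F (Fin m → F)) (J : Matrix (Fin m) (Fin m) F)
    (hJ : ∀ u w : Fin m → F, QuadraticMap.polar (fun x => Q x) u w = u ⬝ᵥ J.mulVec w)
    (φ : (Fin k → F) → Matrix (Fin m) (Fin m) F)
    (hφ_mul : ∀ a b : Fin k → F, φ (a + b) = φ a * φ b)
    (hφ_unit : ∀ a : Fin k → F, IsUnit (φ a))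
    (hφ_isom : ∀ (a : Fin k → F) (w : Fin m → F), Q (Matrix.vecMul w (φ a)) = Q w) :
    ∃ Msub Nsub : Subgroup (GL (Fin (m + k + 1)) F),
      (∀ M : GL (Fin (m + k + 1)) F,
          M ∈ Nsub ↔ ∃ v : Fin m → F,
            (M : Matrix (Fin (m + k + 1)) (Fin (m + k + 1)) F) =
              NMat m k (fun x => Q x) J d v) ∧
      (∀ M : GL (Fin (m + k + 1)) F,
          M ∈ Msub ↔ ∃ a : Fin k → F,
            (M : Matrix (Fin (m + k + 1)) (Fin (m + k + 1)) F) = MMat m k φ a) ∧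
      (∀ M ∈ Msub, IsAffine M) ∧
      (∀ x ∈ Msub, ∀ y ∈ Nsub, x * y * x⁻¹ ∈ Nsub) :=
  MMat_set_is_subgroup_normalizing_general d Q J hJ φ hφ_mul hφ_unit hφ_isom
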